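/- Consider a run of the online algorithm ALG of Figure 3 and of the optimal offline algorithm OPT on the same complaint sequence; let s*_t denote OPT's state at time t, let ℓ*_{i(t)} = ℓ_t·1(i_t=i)·1(s*_t(i)=0) be OPT's loss on criterion i at time t, and define the augmented loss ℓ̃_{i(t)} = ℓ*_{i(t)} + Σ_{j∈N(i)} δ^t_{j→i}·1(s*_t(j)=0). Then Σ_{i=1}^k Σ_{t=1}^T ℓ̃_{i(t)} ≤ 2·Loss(OPT). -/

import Mathlib

open scoped BigOperators Classical

/-- The result of fixing vertex `i` in configuration `s`: vertex `i` becomes fixed and all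
its neighbors in `G` become unfixed. -/
noncomputable def fixStep {k : ℕ} (G : SimpleGraph (Fin k)) (s : Fin k → Bool) (i : Fin k) :
    Fin k → Bool :=
  fun l => if l = i then true else if G.Adj i l then false else s l

/-- A run of the online algorithm ALG of Figure 3 on the complaint sequence `seq`
(`seq t = (i_t, ℓ_t)`), with fixing costs `c`.  `s t` is the configuration before
processing complaint `t`, `tau` and `kap` the counters `τ` and `κ` before processing
complaint `t`, `δ t i j` the amount by which step (b), while processing the complaint at
vertex `i` at time `t`, reduced `κ_j`, and `doesFix t` records whether the complained
vertex is fixed at step (c) of time `t`. -/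
structure AlgRun {k : ℕ} (G : SimpleGraph (Fin k)) (c : Fin k → ℝ)
    (seq : ℕ → Fin k × ℝ) where
  s : ℕ → Fin k → Bool
  tau : ℕ → Fin k → ℝ
  kap : ℕ → Fin k → ℝ
  δ : ℕ → Fin k → Fin k → ℝ
  doesFix : ℕ → Bool
  h_s0 : ∀ i, s 0 i = false
  h_tau0 : ∀ i, tau 0 i = 0
  h_kap0 : ∀ i, kap 0 i = 0
  /-- barrier reductions are nonnegative -/
  h_δ_nonneg : ∀ t i j, 0 ≤ δ t i j
  /-- only the complaint at the current unfixed vertex reduces barriers, and only those of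
  its neighbors -/
  h_δ_supp : ∀ t i j, δ t i j ≠ 0 →
    i = (seq t).1 ∧ G.Adj i j ∧ s t i = false
  /-- a barrier is reduced by at most its current value -/
  h_δ_le : ∀ t j, G.Adj (seq t).1 j → δ t (seq t).1 j ≤ kap t j
  /-- the total reduction is at most the complaint loss -/
  h_δ_sum : ∀ t, s t (seq t).1 = false → (∑ j, δ t (seq t).1 j) ≤ (seq t).2
  /-- exit condition of the while loop of step (b): the loss is exhausted or all
  neighboring barriers are zero -/
  h_exit : ∀ t, s t (seq t).1 = false →
    ((∑ j, δ t (seq t).1 j) = (seq t).2 ∨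
      ∀ j, G.Adj (seq t).1 j → kap t j - δ t (seq t).1 j = 0)
  /-- step (c): the complained vertex is fixed iff `τ_i ≥ max(c_i, ∑_{j∈N(i)} κ_j)` -/
  h_fix_iff : ∀ t, s t (seq t).1 = false →
    (doesFix t = true ↔
      max (c (seq t).1)
        (∑ j, if G.Adj (seq t).1 j then kap t j - δ t (seq t).1 j else 0) ≤
        tau t (seq t).1 + (seq t).2)
  /-- a complaint at a fixed vertex changes nothing -/
  h_fixed_step : ∀ t, s t (seq t).1 = true →
    doesFix t = false ∧ (∀ i, s (t + 1) i = s t i) ∧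
      (∀ i, tau (t + 1) i = tau t i) ∧ (∀ i, kap (t + 1) i = kap t i)
  /-- state and counter updates when the complained vertex gets fixed -/
  h_step_fix : ∀ t, s t (seq t).1 = false → doesFix t = true →
    (∀ i, s (t + 1) i = fixStep G (s t) (seq t).1 i) ∧
      tau (t + 1) (seq t).1 = 0 ∧
      (∀ j, G.Adj (seq t).1 j → tau (t + 1) j = 0) ∧
      (∀ j, j ≠ (seq t).1 → ¬ G.Adj (seq t).1 j → tau (t + 1) j = tau t j) ∧
      kap (t + 1) (seq t).1 = c (seq t).1 ∧
      (∀ j, j ≠ (seq t).1 → kap (t + 1) j = kap t j - δ t (seq t).1 j)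
  /-- state and counter updates when the complained vertex is not fixed -/
  h_step_nofix : ∀ t, s t (seq t).1 = false → doesFix t = false →
    (∀ i, s (t + 1) i = s t i) ∧
      tau (t + 1) (seq t).1 = tau t (seq t).1 + (seq t).2 ∧
      (∀ j, j ≠ (seq t).1 → tau (t + 1) j = tau t j) ∧
      (∀ j, kap (t + 1) j = kap t j - δ t (seq t).1 j)

namespace AlgRun

variable {k : ℕ} {G : SimpleGraph (Fin k)} {c : Fin k → ℝ} {seq : ℕ → Fin k × ℝ}

/-- Total loss of the online algorithm over the first `T` complaints: losses of complaints
arriving at unfixed vertices plus all fixing costs incurred. -/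
noncomputable def loss (R : AlgRun G c seq) (T : ℕ) : ℝ :=
  ∑ t ∈ Finset.range T,
    ((if R.s t (seq t).1 = false then (seq t).2 else 0) +
      (if R.doesFix t then c (seq t).1 else 0))

/-- `f_i`: the number of times the run fixes vertex `i` during the first `T` steps. -/
noncomputable def fixCount (R : AlgRun G c seq) (T : ℕ) (i : Fin k) : ℕ :=
  ((Finset.range T).filter (fun t => R.doesFix t = true ∧ (seq t).1 = i)).card

/-- `δ^t_{i→i}`: the loss retained at vertex `i` at time `t`,
`ℓ_t·1(i_t = i) − ∑_{j ∈ N(i)} δ^t_{i→j}`. -/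
noncomputable def deltaSelf (R : AlgRun G c seq) (t : ℕ) (i : Fin k) : ℝ :=
  (if (seq t).1 = i then (seq t).2 else 0) - ∑ j, if G.Adj i j then R.δ t i j else 0

end AlgRun

/-- The state sequence of an offline algorithm that at each step `t`, after seeing
complaint `t`, either does nothing (`σ t = none`) or fixes the vertex `σ t`. -/
noncomputable def offStates {k : ℕ} (G : SimpleGraph (Fin k))
    (σ : ℕ → Option (Fin k)) : ℕ → Fin k → Bool
  | 0 => fun _ => false
  | t + 1 =>
    match σ t with
    | none => offStates G σ t
    | some i => fixStep G (offStates G σ t) i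

/-- Total loss of the offline algorithm `σ` over the first `T` complaints. -/
noncomputable def offLoss {k : ℕ} (G : SimpleGraph (Fin k)) (c : Fin k → ℝ)
    (seq : ℕ → Fin k × ℝ) (σ : ℕ → Option (Fin k)) (T : ℕ) : ℝ :=
  ∑ t ∈ Finset.range T,
    ((if offStates G σ t (seq t).1 = false then (seq t).2 else 0) +
      (match σ t with | none => 0 | some i => c i))

/-- The loss of the optimal offline algorithm OPT over the first `T` complaints. -/
noncomputable def optLoss {k : ℕ} (G : SimpleGraph (Fin k)) (c : Fin k → ℝ)
    (seq : ℕ → Fin k × ℝ) (T : ℕ) : ℝ :=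
  ⨅ σ : ℕ → Option (Fin k), offLoss G c seq σ T

/-!
The bound holds time step by time step. At time `t` only
the complaint at `i_t` reduces barriers, so the augmented losses at time `t` add up to
`ℓ*_t` plus the reductions `δ^t_{i_t→·}`, the latter counted only when `i_t` is unfixed in
OPT's state. Those reductions total at most `ℓ_t` (step (b) spends at most the complaint's
loss), so whenever they are counted they are bounded by `ℓ*_t = ℓ_t`.
-/

namespace AlgRun

variable {k : ℕ} {G : SimpleGraph (Fin k)} {c : Fin k → ℝ} {seq : ℕ → Fin k × ℝ}

lemma δ_eq_zero_of_ne (R : AlgRun G c seq) {t : ℕ} {j : Fin k} (hj : j ≠ (seq t).1)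
    (i : Fin k) : R.δ t j i = 0 :=
  not_not.mp fun h => hj (R.h_δ_supp t j i h).1

lemma δ_eq_zero_of_fixed (R : AlgRun G c seq) {t : ℕ} (hfix : R.s t (seq t).1 = true)
    (i : Fin k) : R.δ t (seq t).1 i = 0 :=
  not_not.mp fun h => by simp [(R.h_δ_supp t _ i h).2.2] at hfix

lemma sum_δ_le (R : AlgRun G c seq) {t : ℕ} (hℓ : 0 ≤ (seq t).2) :
    ∑ i, R.δ t (seq t).1 i ≤ (seq t).2 := by
  cases hs : R.s t (seq t).1
  · exact R.h_δ_sum t hs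
  · simpa [R.δ_eq_zero_of_fixed hs] using hℓ

lemma sum_δ_unfixed_le (R : AlgRun G c seq) (u : Fin k → Bool) {t : ℕ}
    (hℓ : 0 ≤ (seq t).2) :
    ∑ i, ∑ j, (if G.Adj i j ∧ u j = false then R.δ t j i else 0) ≤
      if u (seq t).1 = false then (seq t).2 else 0 := by
  have h_inner : ∀ i, (∑ j, if G.Adj i j ∧ u j = false then R.δ t j i else 0) =
      if G.Adj i (seq t).1 ∧ u (seq t).1 = false then R.δ t (seq t).1 i else 0 := fun i =>
    Finset.sum_eq_single_of_mem _ (Finset.mem_univ _) fun j _ hj => by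
      simp [R.δ_eq_zero_of_ne hj]
  simp only [h_inner]
  split_ifs with hu
  · calc ∑ i, (if G.Adj i (seq t).1 ∧ u (seq t).1 = false then R.δ t (seq t).1 i else 0)
        ≤ ∑ i, R.δ t (seq t).1 i :=
          Finset.sum_le_sum fun i _ => by split_ifs <;> simp [R.h_δ_nonneg]
      _ ≤ (seq t).2 := R.sum_δ_le hℓ
  · simp [hu]

end AlgRun

lemma fixCost_nonneg {k : ℕ} {c : Fin k → ℝ} (hc : ∀ i, 0 ≤ c i) (o : Option (Fin k)) :
    0 ≤ (match o with | none => 0 | some i => c i) := by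
  cases o
  · exact le_rfl
  · exact hc _

lemma augmentedLoss_step_le {k : ℕ} {G : SimpleGraph (Fin k)} {c : Fin k → ℝ}
    {seq : ℕ → Fin k × ℝ} (R : AlgRun G c seq) (hc : ∀ i, 0 ≤ c i) (σ : ℕ → Option (Fin k))
    {t : ℕ} (hℓ : 0 ≤ (seq t).2) :
    ∑ i, ((if (seq t).1 = i ∧ offStates G σ t i = false then (seq t).2 else 0) +
        ∑ j, if G.Adj i j ∧ offStates G σ t j = false then R.δ t j i else 0) ≤
      2 * ((if offStates G σ t (seq t).1 = false then (seq t).2 else 0) +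
        (match σ t with | none => 0 | some i => c i)) := by
  have h_own : (∑ i, if (seq t).1 = i ∧ offStates G σ t i = false then (seq t).2 else 0) =
      if offStates G σ t (seq t).1 = false then (seq t).2 else 0 := by
    simp [ite_and]
  have h_nonneg : 0 ≤ if offStates G σ t (seq t).1 = false then (seq t).2 else 0 := by
    split_ifs <;> simp [hℓ]
  rw [Finset.sum_add_distrib, h_own]
  linarith [R.sum_δ_unfixed_le (offStates G σ t) hℓ, fixCost_nonneg hc (σ t)]

theorem stmt_16_general {k : ℕ} (G : SimpleGraph (Fin k)) (c : Fin k → ℝ)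
    (hc : ∀ i, 1 ≤ c i) (B : ℝ)
    (seq : ℕ → Fin k × ℝ) (hseq : ∀ t, (seq t).2 ∈ Set.Icc (0 : ℝ) B)
    (T : ℕ) (R : AlgRun G c seq)
    (σ : ℕ → Option (Fin k)) :
    ∑ i, ∑ t ∈ Finset.range T,
      ((if (seq t).1 = i ∧ offStates G σ t i = false then (seq t).2 else 0) +
        ∑ j, if G.Adj i j ∧ offStates G σ t j = false then R.δ t j i else 0) ≤
      2 * offLoss G c seq σ T := by
  rw [Finset.sum_comm, offLoss, Finset.mul_sum]
  exact Finset.sum_le_sum fun t _ =>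
    augmentedLoss_step_le R (fun i => zero_le_one.trans (hc i)) σ (hseq t).1

/-- run ALG and the optimal offline algorithm OPT (an offline strategy `σ`
of minimal loss, with states `s*_t = offStates G σ t`) on the same complaint sequence.
With `ℓ*_{i(t)} = ℓ_t·1(i_t = i)·1(s*_t(i) = 0)` and the augmented loss
`ℓ̃_{i(t)} = ℓ*_{i(t)} + ∑_{j∈N(i)} δ^t_{j→i}·1(s*_t(j) = 0)`, one has
`∑_i ∑_t ℓ̃_{i(t)} ≤ 2·Loss(OPT)`. -/
theorem stmt_16 {k : ℕ} (G : SimpleGraph (Fin k)) (c : Fin k → ℝ)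
    (hc : ∀ i, 1 ≤ c i) (B : ℝ) (hB : 1 ≤ B)
    (seq : ℕ → Fin k × ℝ) (hseq : ∀ t, (seq t).2 ∈ Set.Icc (0 : ℝ) B)
    (T : ℕ) (R : AlgRun G c seq)
    (σ : ℕ → Option (Fin k))
    (hσopt : ∀ σ' : ℕ → Option (Fin k), offLoss G c seq σ T ≤ offLoss G c seq σ' T) :
    ∑ i, ∑ t ∈ Finset.range T,
      ((if (seq t).1 = i ∧ offStates G σ t i = false then (seq t).2 else 0) +
        ∑ j, if G.Adj i j ∧ offStates G σ t j = false then R.δ t j i else 0) ≤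
      2 * offLoss G c seq σ T :=
  stmt_16_general G c hc B seq hseq T R σ
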